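/- If f(z) = z + Σ_{n≥2} a_n z^n is analytic on U and Σ_{n≥2} (n-α-(n-1)αβ)|a_n| ≤ 1-α, then Re[ z f'(z) / (β z f'(z) + (1-β) f(z)) ] > α for all z ∈ U. -/

import Mathlib

/-!
Put `p = z f'(z)` and `q = β z f'(z) + (1 - β) f(z)`. Since `α < 1`, `Re (p / q) > α` says that
`p / q` is closer to `1` than to `2α - 1`, i.e. `‖p - q‖ < ‖p - (2α - 1) q‖`. Expanding both sides
in the coefficients, `p - q` and `p - (2α - 1) q - 2(1 - α) z` are power series whose coefficients
have moduli `λₙ|aₙ|` and `μₙ|aₙ|` with `λₙ, μₙ ≥ 0` and `λₙ + μₙ = 2(n - α - (n - 1)αβ)`.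
The coefficient condition bounds the sum of their norms by `2(1 - α)|z|² < 2(1 - α)|z|`, and the
triangle inequality concludes.
-/

open Complex

open Metric

theorem add_div_two_lt_re_of_norm_sub_lt {w : ℂ} {a b : ℝ} (hab : b < a)
    (h : ‖w - a‖ < ‖w - b‖) : (a + b) / 2 < w.re := by
  have hsq := pow_lt_pow_left₀ h (norm_nonneg _) two_ne_zero
  simp only [Complex.sq_norm, Complex.normSq_apply, sub_re, sub_im, ofReal_re, ofReal_im,
    sub_zero] at hsq
  nlinarith

theorem lt_re_div_of_norm_sub_lt {α : ℝ} (hα : α < 1) {p q : ℂ}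
    (h : ‖p - q‖ < ‖p - (2 * α - 1) * q‖) : α < (p / q).re := by
  have hq : q ≠ 0 := by
    rintro rfl
    simp at h
  have hw : ‖p / q - (1 : ℝ)‖ < ‖p / q - (2 * α - 1 : ℝ)‖ := by
    rw [← mul_lt_mul_iff_of_pos_right (norm_pos_iff.2 hq), ← norm_mul, ← norm_mul, sub_mul,
      sub_mul, div_mul_cancel₀ _ hq]
    simpa using h
  have := add_div_two_lt_re_of_norm_sub_lt (by linarith) hw
  linarith

theorem hasDerivAt_tsum_mul_pow_add {b : ℕ → ℂ} (k : ℕ)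
    (hb : Summable fun n => ((n + k : ℕ) : ℝ) * ‖b n‖) {z : ℂ} (hz : z ∈ ball (0 : ℂ) 1) :
    HasDerivAt (fun y => ∑' n, b n * y ^ (n + k))
      (∑' n, ((n + k : ℕ) : ℂ) * b n * z ^ (n + k - 1)) z := by
  refine hasDerivAt_tsum_of_isPreconnected (g := fun n y => b n * y ^ (n + k))
    (g' := fun n y => ((n + k : ℕ) : ℂ) * b n * y ^ (n + k - 1)) hb isOpen_ball
    (convex_ball 0 1).isPreconnected (fun n y _ => ?_) (fun n y hy => ?_)
    (mem_ball_self one_pos) ?_ hz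
  · simpa [mul_comm, mul_assoc] using (hasDerivAt_pow (n + k) y).const_mul (b n)
  · have hy : ‖y‖ ≤ 1 := (mem_ball_zero_iff.1 hy).le
    rw [norm_mul, norm_mul, norm_pow, Complex.norm_natCast, mul_assoc]
    exact mul_le_mul_of_nonneg_left (mul_le_of_le_one_right (norm_nonneg _)
      (pow_le_one₀ (norm_nonneg _) hy)) (Nat.cast_nonneg _)
  · refine summable_of_ne_finset_zero (s := {0}) fun n hn => ?_
    rw [Finset.mem_singleton] at hn
    simp [zero_pow (by omega : n + k ≠ 0)]

theorem hasSum_mul_deriv_of_hasSum {f : ℂ → ℂ} {b : ℕ → ℂ}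
    (hb : Summable fun n => ((n + 2 : ℕ) : ℝ) * ‖b n‖)
    (hf : ∀ y ∈ ball (0 : ℂ) 1, HasSum (fun n => b n * y ^ (n + 2)) (f y - y))
    {z : ℂ} (hz : z ∈ ball (0 : ℂ) 1) :
    HasSum (fun n => ((n + 2 : ℕ) : ℂ) * (b n * z ^ (n + 2))) (z * deriv f z - z) := by
  have hfeq : f =ᶠ[nhds z] fun y => y + ∑' n, b n * y ^ (n + 2) :=
    Filter.eventuallyEq_of_mem (isOpen_ball.mem_nhds hz) fun y hy => by
      rw [(hf y hy).tsum_eq]; ring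
  have hderiv : deriv f z = 1 + ∑' n, ((n + 2 : ℕ) : ℂ) * b n * z ^ (n + 1) :=
    (((hasDerivAt_id z).add (hasDerivAt_tsum_mul_pow_add 2 hb hz)).congr_of_eventuallyEq
      hfeq).deriv
  have hsum : Summable fun n => ((n + 2 : ℕ) : ℂ) * b n * z ^ (n + 1) := by
    refine .of_norm_bounded hb fun n => ?_
    have hz1 : ‖z‖ ≤ 1 := (mem_ball_zero_iff.1 hz).le
    rw [norm_mul, norm_mul, norm_pow, Complex.norm_natCast]
    exact mul_le_of_le_one_right (by positivity) (pow_le_one₀ (norm_nonneg _) hz1)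
  have hterm : (fun n => ((n + 2 : ℕ) : ℂ) * (b n * z ^ (n + 2)))
      = fun n => z * (((n + 2 : ℕ) : ℂ) * b n * z ^ (n + 1)) := by
    ext n; ring
  rw [hderiv, mul_add, mul_one, add_sub_cancel_left, ← hsum.tsum_mul_left, hterm]
  exact (hsum.mul_left z).hasSum

theorem HasSum.ofReal_affine_mul {u : ℕ → ℂ} {m : ℕ → ℝ} {F P : ℂ} (hF : HasSum u F)
    (hP : HasSum (fun n => (m n : ℂ) * u n) P) (x y : ℝ) :
    HasSum (fun n => ((x * m n + y : ℝ) : ℂ) * u n) (x * P + y * F) := by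
  have hterm : (fun n => ((x * m n + y : ℝ) : ℂ) * u n)
      = fun n => x * ((m n : ℂ) * u n) + y * u n := by
    ext n; push_cast; ring
  rw [hterm]
  exact (hP.mul_left _).add (hF.mul_left _)

theorem norm_add_norm_le_of_hasSum {u : ℕ → ℂ} {q₁ q₂ g : ℕ → ℝ} {s₁ s₂ : ℂ} {G : ℝ}
    (h₁ : HasSum (fun n => (q₁ n : ℂ) * u n) s₁) (h₂ : HasSum (fun n => (q₂ n : ℂ) * u n) s₂)
    (hq₁ : ∀ n, 0 ≤ q₁ n) (hq₂ : ∀ n, 0 ≤ q₂ n) (hg : HasSum g G)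
    (hle : ∀ n, (q₁ n + q₂ n) * ‖u n‖ ≤ g n) : ‖s₁‖ + ‖s₂‖ ≤ G := by
  have hnorm : ∀ (q : ℕ → ℝ), (∀ n, 0 ≤ q n) → ∀ n, ‖(q n : ℂ) * u n‖ = q n * ‖u n‖ :=
    fun q hq n => by rw [norm_mul, norm_real, Real.norm_of_nonneg (hq n)]
  have hs₁ : Summable fun n => q₁ n * ‖u n‖ := hg.summable.of_nonneg_of_le
    (fun n => by have := hq₁ n; positivity) fun n => by nlinarith [hle n, hq₂ n, norm_nonneg (u n)]
  have hs₂ : Summable fun n => q₂ n * ‖u n‖ := hg.summable.of_nonneg_of_le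
    (fun n => by have := hq₂ n; positivity) fun n => by nlinarith [hle n, hq₁ n, norm_nonneg (u n)]
  calc ‖s₁‖ + ‖s₂‖ ≤ ∑' n, q₁ n * ‖u n‖ + ∑' n, q₂ n * ‖u n‖ :=
        add_le_add (h₁.norm_le_of_bounded hs₁.hasSum fun n => (hnorm q₁ hq₁ n).le)
          (h₂.norm_le_of_bounded hs₂.hasSum fun n => (hnorm q₂ hq₂ n).le)
    _ ≤ G := hasSum_le (fun n => by linarith [hle n]) (hs₁.hasSum.add hs₂.hasSum) hg

/-- The weight `n - α - (n - 1) α β` of the coefficient condition, shifted to index `n + 2`. -/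
def coeffWeight (α β : ℝ) (n : ℕ) : ℝ := ((n : ℝ) + 2) - α - ((n : ℝ) + 1) * α * β

theorem add_two_mul_one_sub_le_coeffWeight {α β : ℝ} (hα0 : 0 ≤ α) (hβ1 : β ≤ 1) (n : ℕ) :
    ((n : ℝ) + 2) * (1 - α) ≤ coeffWeight α β n := by
  have := mul_nonneg (mul_nonneg hα0 (sub_nonneg.2 hβ1)) (n.cast_nonneg (α := ℝ))
  unfold coeffWeight
  nlinarith

theorem summable_natCast_add_two_mul_norm {α β : ℝ} (hα0 : 0 ≤ α) (hα1 : α < 1) (hβ1 : β ≤ 1)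
    {b : ℕ → ℂ} (hsum : Summable fun n => coeffWeight α β n * ‖b n‖) :
    Summable fun n => ((n + 2 : ℕ) : ℝ) * ‖b n‖ := by
  refine (hsum.mul_left (1 - α)⁻¹).of_nonneg_of_le (fun n => by positivity) fun n => ?_
  rw [le_inv_mul_iff₀ (by linarith), ← mul_assoc, mul_comm (1 - α)]
  push_cast
  exact mul_le_mul_of_nonneg_right (add_two_mul_one_sub_le_coeffWeight hα0 hβ1 n) (norm_nonneg _)

theorem norm_sub_add_norm_sub_le_of_tsum_coeffWeight_le {α β : ℝ} (hα0 : 0 ≤ α)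
    (hα1 : α < 1) (hβ0 : 0 ≤ β) (hβ1 : β < 1) {b : ℕ → ℂ}
    (hsum : Summable fun n => coeffWeight α β n * ‖b n‖)
    (hle : ∑' n, coeffWeight α β n * ‖b n‖ ≤ 1 - α) {z p w : ℂ} (hz : ‖z‖ ≤ 1)
    (hw : HasSum (fun n => b n * z ^ (n + 2)) (w - z))
    (hp : HasSum (fun n => ((n + 2 : ℕ) : ℂ) * (b n * z ^ (n + 2))) (p - z)) :
    ‖p - (β * p + (1 - β) * w)‖
      + ‖p - (2 * α - 1) * (β * p + (1 - β) * w) - 2 * (1 - α) * z‖ ≤ 2 * (1 - α) * ‖z‖ ^ 2 := by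
  set Q := (β : ℂ) * p + (1 - β) * w
  have hp' : HasSum (fun n => (((n + 2 : ℕ) : ℝ) : ℂ) * (b n * z ^ (n + 2))) (p - z) := by
    simpa only [Complex.ofReal_natCast] using hp
  -- both coefficient sequences are nonnegative and add up to `2 * coeffWeight α β n`
  have h₁ := hw.ofReal_affine_mul hp' (1 - β) (-(1 - β))
  have h₂ := hw.ofReal_affine_mul hp' (1 - (2 * α - 1) * β) (-((2 * α - 1) * (1 - β)))
  rw [show ((1 - β : ℝ) : ℂ) * (p - z) + ((-(1 - β) : ℝ) : ℂ) * (w - z) = p - Q by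
    push_cast; ring] at h₁
  rw [show ((1 - (2 * α - 1) * β : ℝ) : ℂ) * (p - z) + ((-((2 * α - 1) * (1 - β)) : ℝ) : ℂ) *
    (w - z) = p - (2 * α - 1) * Q - 2 * (1 - α) * z by push_cast; ring] at h₂
  have hn : ∀ n : ℕ, (0 : ℝ) ≤ n + 1 := fun n => by positivity
  have hβn : ∀ n : ℕ, 0 ≤ (1 - β) * (n + 1) := fun n => mul_nonneg (by linarith) (hn n)
  have hq₁ : ∀ n : ℕ, 0 ≤ (1 - β) * ((n + 2 : ℕ) : ℝ) + -(1 - β) := fun n => by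
    push_cast; linarith [hβn n]
  have hq₂ : ∀ n : ℕ, 0 ≤ (1 - (2 * α - 1) * β) * ((n + 2 : ℕ) : ℝ) + -((2 * α - 1) * (1 - β)) :=
    fun n => by
      push_cast
      nlinarith [hβn n, mul_nonneg (by linarith : (0 : ℝ) ≤ 2 - 2 * α)
        (by nlinarith [hn n] : 0 ≤ β * (n + 1) + 1)]
  have hterm : ∀ n : ℕ, ((1 - β) * ((n + 2 : ℕ) : ℝ) + -(1 - β)
      + ((1 - (2 * α - 1) * β) * ((n + 2 : ℕ) : ℝ) + -((2 * α - 1) * (1 - β))))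
        * ‖b n * z ^ (n + 2)‖ ≤ ‖z‖ ^ 2 * (2 * (coeffWeight α β n * ‖b n‖)) := fun n => by
    have hc := (mul_nonneg (by positivity) (sub_nonneg.2 hα1.le)).trans
      (add_two_mul_one_sub_le_coeffWeight hα0 hβ1.le n)
    have hpow : ‖z‖ ^ (n + 2) ≤ ‖z‖ ^ 2 := pow_le_pow_of_le_one (norm_nonneg z) hz (by omega)
    rw [norm_mul, norm_pow]
    unfold coeffWeight at hc ⊢
    push_cast
    nlinarith [mul_le_mul_of_nonneg_left hpow (mul_nonneg hc (norm_nonneg (b n)))]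
  calc _ ≤ ‖z‖ ^ 2 * (2 * ∑' n, coeffWeight α β n * ‖b n‖) :=
        norm_add_norm_le_of_hasSum h₁ h₂ hq₁ hq₂ ((hsum.hasSum.mul_left 2).mul_left _) hterm
    _ ≤ 2 * (1 - α) * ‖z‖ ^ 2 := by nlinarith [sq_nonneg ‖z‖]

theorem norm_sub_lt_norm_sub_of_tsum_coeffWeight_le {α β : ℝ} (hα0 : 0 ≤ α) (hα1 : α < 1)
    (hβ0 : 0 ≤ β) (hβ1 : β < 1) {b : ℕ → ℂ}
    (hsum : Summable fun n => coeffWeight α β n * ‖b n‖)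
    (hle : ∑' n, coeffWeight α β n * ‖b n‖ ≤ 1 - α) {z p w : ℂ} (hz0 : z ≠ 0) (hz : ‖z‖ < 1)
    (hw : HasSum (fun n => b n * z ^ (n + 2)) (w - z))
    (hp : HasSum (fun n => ((n + 2 : ℕ) : ℂ) * (b n * z ^ (n + 2))) (p - z)) :
    ‖p - (β * p + (1 - β) * w)‖ < ‖p - (2 * α - 1) * (β * p + (1 - β) * w)‖ := by
  have hbound := norm_sub_add_norm_sub_le_of_tsum_coeffWeight_le hα0 hα1 hβ0 hβ1 hsum hle hz.le
    hw hp
  set v := p - (2 * α - 1) * (β * p + (1 - β) * w)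
  have htri : ‖2 * (1 - (α : ℂ)) * z‖ ≤ ‖v‖ + ‖v - 2 * (1 - α) * z‖ := by
    simpa using norm_sub_le v (v - 2 * (1 - α) * z)
  have hnz : ‖2 * (1 - (α : ℂ)) * z‖ = 2 * (1 - α) * ‖z‖ := by
    rw [show (2 * (1 - (α : ℂ))) = ((2 * (1 - α) : ℝ) : ℂ) by push_cast; ring, norm_mul,
      norm_real, Real.norm_of_nonneg (by linarith)]
  have hz2 : ‖z‖ ^ 2 < ‖z‖ := by nlinarith [norm_pos_iff.2 hz0]
  nlinarith [sub_pos.2 hα1]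

theorem stmt5 (α β : ℝ) (hα0 : 0 ≤ α) (hα1 : α < 1) (hβ0 : 0 ≤ β) (hβ1 : β < 1)
    (f : ℂ → ℂ) (a : ℕ → ℂ)
    (hf : ∀ z ∈ Metric.ball (0 : ℂ) 1,
      HasSum (fun n : ℕ => a (n + 2) * z ^ (n + 2)) (f z - z))
    (hsum : Summable (fun n : ℕ =>
      (((n : ℝ) + 2) - α - ((n : ℝ) + 1) * α * β) * ‖a (n + 2)‖))
    (hle : ∑' n : ℕ, (((n : ℝ) + 2) - α - ((n : ℝ) + 1) * α * β) * ‖a (n + 2)‖ ≤ 1 - α) :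
    ∀ z ∈ Metric.ball (0 : ℂ) 1, z ≠ 0 →
      α < ((z * deriv f z /
        ((β : ℂ) * z * deriv f z + (1 - (β : ℂ)) * f z)).re) := by
  intro z hz hz0
  have hderiv := hasSum_mul_deriv_of_hasSum (b := fun n => a (n + 2))
    (summable_natCast_add_two_mul_norm hα0 hα1 hβ1.le hsum) hf hz
  have key := norm_sub_lt_norm_sub_of_tsum_coeffWeight_le hα0 hα1 hβ0 hβ1 hsum hle hz0
    (mem_ball_zero_iff.1 hz) (hf z hz) hderiv
  rw [mul_assoc]
  exact lt_re_div_of_norm_sub_lt hα1 key
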